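/- arXiv:1809.04542 — 3 statements merged into one kernel-verified Lean document; each statement's English description precedes it below -/
import Mathlib

section
/- For a lower semicontinuous convex function f : ℝ → (-∞,∞] with f(1) = 0 that is finite in a neighbourhood of 1, the function x ↦ f*(x) − x tends to ∞ as |x| → ∞, where f* is the convex conjugate of f. -/
/-! Testing the supremum defining `f*(s)` at a single point `x` with `f x < ⊤` gives
`f*(s) - s t ≥ s (x - t) - f x`, an affine function of `s` with slope `x - t`. Since `f` is finite
at points on both sides of `1`, this bounds `f*(s) - s` below by functions tending to `∞` as
`s → ∞` and as `s → -∞`. -/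

open MeasureTheory Filter ENNReal

/-- Convex conjugate of an extended-real-valued function on ℝ. -/
noncomputable def fStar (f : ℝ → EReal) (s : ℝ) : EReal := ⨆ x : ℝ, ((s * x : ℝ) : EReal) - f x

open Topology

lemma coe_mul_sub_toReal_le_fStar_sub {f : ℝ → EReal} {x : ℝ} (hx : f x ≠ ⊤) (s t : ℝ) :
    ((s * (x - t) - (f x).toReal : ℝ) : EReal) ≤ fStar f s - ((s * t : ℝ) : EReal) :=
  calc ((s * (x - t) - (f x).toReal : ℝ) : EReal)
      = ((s * x : ℝ) : EReal) - ((f x).toReal : EReal) - ((s * t : ℝ) : EReal) := by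
        rw [← EReal.coe_sub, ← EReal.coe_sub]; congr 1; ring
    _ ≤ ((s * x : ℝ) : EReal) - f x - ((s * t : ℝ) : EReal) :=
        EReal.sub_le_sub (EReal.sub_le_sub le_rfl (EReal.le_coe_toReal hx)) le_rfl
    _ ≤ fStar f s - ((s * t : ℝ) : EReal) :=
        EReal.sub_le_sub (le_iSup (fun x => ((s * x : ℝ) : EReal) - f x) x) le_rfl

lemma tendsto_fStar_sub_mul_atTop {f : ℝ → EReal} {x t : ℝ} (htx : t < x) (hx : f x ≠ ⊤) :
    Tendsto (fun s => fStar f s - ((s * t : ℝ) : EReal)) atTop (𝓝 ⊤) := by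
  have hlin : Tendsto (fun s : ℝ => s * (x - t) - (f x).toReal) atTop atTop :=
    tendsto_atTop_add_const_right _ _ (tendsto_id.atTop_mul_const (sub_pos.2 htx))
  exact tendsto_nhds_top_mono (EReal.tendsto_coe_nhds_top_iff.2 hlin)
    (Eventually.of_forall (coe_mul_sub_toReal_le_fStar_sub hx · t))

lemma tendsto_fStar_sub_mul_atBot {f : ℝ → EReal} {x t : ℝ} (hxt : x < t) (hx : f x ≠ ⊤) :
    Tendsto (fun s => fStar f s - ((s * t : ℝ) : EReal)) atBot (𝓝 ⊤) := by
  have hlin : Tendsto (fun s : ℝ => s * (x - t) - (f x).toReal) atBot atTop :=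
    tendsto_atTop_add_const_right _ _ (tendsto_id.atBot_mul_const_of_neg (sub_neg.2 hxt))
  exact tendsto_nhds_top_mono (EReal.tendsto_coe_nhds_top_iff.2 hlin)
    (Eventually.of_forall (coe_mul_sub_toReal_le_fStar_sub hx · t))

theorem fStar_sub_id_tendsto_top_general (f : ℝ → EReal)
    (hfin : ∃ ε > (0:ℝ), ∀ x : ℝ, |x - 1| < ε → f x ≠ ⊤) :
    Tendsto (fun x : ℝ => fStar f x - (x : EReal)) (cocompact ℝ) (nhds ⊤) := by
  obtain ⟨ε, hε, hf⟩ := hfin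
  have hright : f (1 + ε / 2) ≠ ⊤ :=
    hf _ (by rw [add_sub_cancel_left, abs_of_pos (by positivity)]; linarith)
  have hleft : f (1 - ε / 2) ≠ ⊤ :=
    hf _ (by rw [sub_sub_cancel_left, abs_neg, abs_of_pos (by positivity)]; linarith)
  rw [cocompact_eq_atBot_atTop]
  simpa only [mul_one] using
    (tendsto_fStar_sub_mul_atBot (t := 1) (by linarith) hleft).sup
      (tendsto_fStar_sub_mul_atTop (t := 1) (by linarith) hright)

/-- If f : ℝ → (-∞,∞] is lower semicontinuous, convex, f(1) = 0 and f is finite in a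
neighbourhood of 1, then f*(x) − x → ∞ as |x| → ∞. -/
theorem fStar_sub_id_tendsto_top (f : ℝ → EReal)
    (hlsc : LowerSemicontinuous f)
    (hconv : ∀ (x y a b : ℝ), 0 < a → 0 < b → a + b = 1 →
      f (a * x + b * y) ≤ (a : EReal) * f x + (b : EReal) * f y)
    (hbot : ∀ x, f x ≠ ⊥) (h1 : f 1 = 0)
    (hfin : ∃ ε > (0:ℝ), ∀ x : ℝ, |x - 1| < ε → f x ≠ ⊤) :
    Tendsto (fun x : ℝ => fStar f x - (x : EReal)) (cocompact ℝ) (nhds ⊤) :=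
  fStar_sub_id_tendsto_top_general f hfin
end

section
/- Let (Ω, Σ) be a measurable space, Q a probability measure, and f* : ℝ → (-∞,∞] the convex conjugate of a proper lsc convex function f. Then the map h ↦ ∫ f*(h) dQ, defined on bounded measurable functions with the uniform-norm topology, is lower semicontinuous. -/
open MeasureTheory Filter ENNReal

/-- Positive part of an extended real, as an extended nonnegative real. -/
noncomputable def erealPos (x : EReal) : ℝ≥0∞ := if x = ⊤ then ⊤ else ENNReal.ofReal x.toReal

/-- Integral of an extended-real-valued function, with values in [-∞,∞]. -/
noncomputable def eintegral {Ω : Type*} [MeasurableSpace Ω] (Q : Measure Ω) (g : Ω → EReal) : EReal :=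
  ((∫⁻ x, erealPos (g x) ∂Q) : EReal) - ((∫⁻ x, erealPos (-(g x)) ∂Q) : EReal)

/-- The set B(Ω,Σ) of bounded measurable real-valued functions. -/
def BM (Ω : Type*) [MeasurableSpace Ω] : Set (Ω → ℝ) :=
  {g | Measurable g ∧ ∃ C, ∀ x, |g x| ≤ C}

/-- R(h) = inf_{b ∈ ℝ} ( E_Q[f*(h + b)] − b ). -/
noncomputable def Rfun {Ω : Type*} [MeasurableSpace Ω] (Q : Measure Ω) (f : ℝ → EReal)
    (h : Ω → ℝ) : EReal :=
  ⨅ b : ℝ, eintegral Q (fun x => fStar f (h x + b)) - (b : EReal)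

/-!
Since `f = ⊤` on `(-∞, 0)`, the conjugate `f*` is monotone; as a supremum of continuous functions
it is lower semicontinuous; and `f(1) = 0` gives `f*(s) ≥ s`. If `hₙ → h` uniformly, then for each
`k` eventually `hₙ ≥ h - 1/(k+1)`, so `∫ f*(h - 1/(k+1)) ≤ liminf ∫ f*(hₙ)`. By monotonicity and
lower semicontinuity `f*(h - 1/(k+1))` increases to `f*(h)`, and these functions are bounded below
by `-(sup |h| + 1)`, so monotone convergence gives `∫ f*(h) ≤ liminf ∫ f*(hₙ)`.
-/

open scoped Topology NNReal

theorem LowerSemicontinuous.le_iSup_of_tendsto {X ι γ : Type*} [TopologicalSpace X]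
    [CompleteLinearOrder γ] {φ : X → γ} (hφ : LowerSemicontinuous φ) {l : Filter ι} [l.NeBot]
    {u : ι → X} {t : X} (hu : Tendsto u l (𝓝 t)) : φ t ≤ ⨆ i, φ (u i) :=
  le_of_forall_lt fun _ hc ↦
    let ⟨i, hi⟩ := (hu.eventually (hφ t _ hc)).exists
    hi.trans_le (le_iSup (fun i ↦ φ (u i)) i)

theorem EReal.continuous_add_coe (c : ℝ) : Continuous fun y : EReal ↦ y + c :=
  continuous_iff_continuousAt.2 fun _ ↦
    (EReal.continuousAt_add (Or.inr (coe_ne_bot c)) (Or.inr (coe_ne_top c))).comp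
      (continuous_id.prodMk continuous_const).continuousAt

theorem EReal.continuous_coe_mul_sub (x : ℝ) (a : EReal) :
    Continuous fun s : ℝ ↦ ((s * x : ℝ) : EReal) - a := by
  induction a with
  | bot => simpa only [EReal.coe_sub_bot] using continuous_const
  | top => simpa only [EReal.sub_top] using continuous_const
  | coe r =>
    simp only [← EReal.coe_sub]
    exact continuous_coe_real_ereal.comp (by fun_prop : Continuous fun s : ℝ ↦ s * x - r)

theorem EReal.toENNReal_add_coe_add_toENNReal_neg {y : EReal} {c : ℝ≥0}
    (hy : -((c : ℝ) : EReal) ≤ y) :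
    (y + (c : ℝ)).toENNReal + (-y).toENNReal = y.toENNReal + c := by
  induction y with
  | bot => simp at hy
  | top => simp
  | coe r =>
    have hr : -(c : ℝ) ≤ r := by exact_mod_cast hy
    rw [← EReal.coe_add, ← EReal.coe_neg]
    simp only [EReal.real_coe_toENNReal]
    rcases le_total 0 r with h0 | h0
    · rw [ENNReal.ofReal_add h0 c.coe_nonneg, ENNReal.ofReal_of_nonpos (neg_nonpos.2 h0)]
      simp
    · rw [ENNReal.ofReal_of_nonpos h0, ← ENNReal.ofReal_add (by linarith) (by linarith)]
      simp

theorem EReal.coe_ennreal_sub_add_eq {a b d : ℝ≥0∞} {c : ℝ≥0} (hb : b ≠ ∞) (h : d + b = a + c) :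
    (a : EReal) - b + (c : ℝ) = d := by
  lift b to ℝ≥0 using hb
  have h' : (d : EReal) + (b : ℝ) = a + (c : ℝ) := by
    simpa [EReal.coe_nnreal_eq_coe_real] using congrArg ((↑) : ℝ≥0∞ → EReal) h
  rw [EReal.coe_nnreal_eq_coe_real, sub_eq_add_neg, add_right_comm, ← h', ← sub_eq_add_neg,
    EReal.add_sub_cancel_right]

theorem EReal.iSup_add_coe {ι : Sort*} (u : ι → EReal) (c : ℝ) :
    (⨆ i, u i) + c = ⨆ i, (u i + c) :=
  Monotone.map_iSup_of_continuousAt (f := fun y : EReal ↦ y + c)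
    (EReal.continuous_add_coe c).continuousAt (fun _ _ h ↦ add_le_add_left h _) (by simp)

theorem EReal.toENNReal_iSup {ι : Sort*} (u : ι → EReal) :
    (⨆ i, u i).toENNReal = ⨆ i, (u i).toENNReal :=
  Monotone.map_iSup_of_continuousAt EReal.continuous_toENNReal.continuousAt
    (fun _ _ ↦ EReal.toENNReal_le_toENNReal) EReal.toENNReal_bot

theorem EReal.coe_ennreal_iSup {ι : Sort*} [Nonempty ι] (u : ι → ℝ≥0∞) :
    ((⨆ i, u i : ℝ≥0∞) : EReal) = ⨆ i, (u i : EReal) :=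
  Monotone.map_ciSup_of_continuousAt continuous_coe_ennreal_ereal.continuousAt
    fun _ _ ↦ EReal.coe_ennreal_le_coe_ennreal_iff.mpr

section Conjugate

variable {f : ℝ → EReal}

theorem fStar_mono (hneg : ∀ x : ℝ, x < 0 → f x = ⊤) : Monotone (fStar f) := by
  intro s t hst
  refine iSup_mono fun x ↦ ?_
  rcases lt_or_ge x 0 with hx | hx
  · simp only [hneg x hx, EReal.sub_top, le_refl]
  · exact EReal.sub_le_sub (EReal.coe_le_coe_iff.mpr (mul_le_mul_of_nonneg_right hst hx)) le_rfl

theorem coe_le_fStar (h1 : f 1 = 0) (s : ℝ) : (s : EReal) ≤ fStar f s :=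
  le_iSup_of_le 1 (by simp [h1])

theorem lowerSemicontinuous_fStar (f : ℝ → EReal) : LowerSemicontinuous (fStar f) :=
  lowerSemicontinuous_iSup fun x ↦ (EReal.continuous_coe_mul_sub x (f x)).lowerSemicontinuous

end Conjugate

section Integral

variable {Ω : Type*} [MeasurableSpace Ω] (Q : Measure Ω)

theorem eintegral_eq_toENNReal (g : Ω → EReal) :
    eintegral Q g = (∫⁻ x, (g x).toENNReal ∂Q : EReal) - (∫⁻ x, (-g x).toENNReal ∂Q : EReal) :=
  rfl

theorem eintegral_mono {g₁ g₂ : Ω → EReal} (hg : g₁ ≤ g₂) : eintegral Q g₁ ≤ eintegral Q g₂ := by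
  rw [eintegral_eq_toENNReal, eintegral_eq_toENNReal]
  refine EReal.sub_le_sub ?_ ?_ <;> refine EReal.coe_ennreal_le_coe_ennreal_iff.mpr
    (lintegral_mono fun x ↦ EReal.toENNReal_le_toENNReal ?_)
  · exact hg x
  · exact EReal.neg_le_neg_iff.mpr (hg x)

variable [IsProbabilityMeasure Q]

theorem eintegral_add_coe {g : Ω → EReal} (hg : Measurable g) {c : ℝ≥0}
    (hgc : ∀ x, -((c : ℝ) : EReal) ≤ g x) :
    eintegral Q g + (c : ℝ) = ∫⁻ x, (g x + (c : ℝ)).toENNReal ∂Q := by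
  have hneg_le : ∀ x, (-g x).toENNReal ≤ c := fun x ↦ by
    simpa using EReal.toENNReal_le_toENNReal (EReal.neg_le.mp (hgc x))
  have hfin : ∫⁻ x, (-g x).toENNReal ∂Q ≠ ∞ :=
    ne_top_of_le_ne_top ENNReal.coe_ne_top <|
      (lintegral_mono hneg_le).trans_eq (by simp : ∫⁻ _, (c : ℝ≥0∞) ∂Q = c)
  rw [eintegral_eq_toENNReal]
  refine EReal.coe_ennreal_sub_add_eq hfin ?_
  calc ∫⁻ x, (g x + (c : ℝ)).toENNReal ∂Q + ∫⁻ x, (-g x).toENNReal ∂Q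
      = ∫⁻ x, ((g x + (c : ℝ)).toENNReal + (-g x).toENNReal) ∂Q :=
        (lintegral_add_right _ hg.neg.ereal_toENNReal).symm
    _ = ∫⁻ x, ((g x).toENNReal + c) ∂Q :=
        lintegral_congr fun x ↦ EReal.toENNReal_add_coe_add_toENNReal_neg (hgc x)
    _ = ∫⁻ x, (g x).toENNReal ∂Q + c := by simp [lintegral_add_right _ measurable_const]

theorem eintegral_iSup_of_monotone {G : ℕ → Ω → EReal} (hG : ∀ k, Measurable (G k))
    (hmono : Monotone G) {c : ℝ≥0} (hc : ∀ x, -((c : ℝ) : EReal) ≤ G 0 x) :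
    eintegral Q (fun x ↦ ⨆ k, G k x) = ⨆ k, eintegral Q (G k) := by
  have hlower : ∀ k x, -((c : ℝ) : EReal) ≤ G k x :=
    fun k x ↦ (hc x).trans (hmono (Nat.zero_le k) x)
  have key : eintegral Q (fun x ↦ ⨆ k, G k x) + (c : ℝ) = (⨆ k, eintegral Q (G k)) + (c : ℝ) := by
    rw [eintegral_add_coe Q (Measurable.iSup hG) fun x ↦ (hlower 0 x).trans (le_iSup (G · x) 0),
      EReal.iSup_add_coe]
    simp_rw [eintegral_add_coe Q (hG _) (hlower _), EReal.iSup_add_coe, EReal.toENNReal_iSup]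
    rw [lintegral_iSup (fun k ↦ ((hG k).add_const _).ereal_toENNReal)
      fun k l hkl x ↦ EReal.toENNReal_le_toENNReal (add_le_add_left (hmono hkl x) _),
      EReal.coe_ennreal_iSup]
  simpa [EReal.add_sub_cancel_right] using congrArg (· - ((c : ℝ) : EReal)) key

end Integral

theorem eintegral_fStar_lowerSemicontinuous_general {Ω : Type*} [MeasurableSpace Ω]
    (Q : Measure Ω) [IsProbabilityMeasure Q] (f : ℝ → EReal)
    (h1 : f 1 = 0) (hneg : ∀ x : ℝ, x < 0 → f x = ⊤)
    (h : Ω → ℝ) (hh : h ∈ BM Ω) (hn : ℕ → Ω → ℝ)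
    (hconv' : TendstoUniformly hn h atTop) :
    eintegral Q (fun x => fStar f (h x)) ≤
      liminf (fun n => eintegral Q (fun x => fStar f (hn n x))) atTop := by
  obtain ⟨hh_meas, C, hC⟩ := hh
  set L := liminf (fun n ↦ eintegral Q fun x ↦ fStar f (hn n x)) atTop
  set G : ℕ → Ω → EReal := fun k x ↦ fStar f (h x - 1 / (k + 1))
  have hG_sup : (fun x ↦ fStar f (h x)) = fun x ↦ ⨆ k, G k x := funext fun x ↦
    le_antisymm
      ((lowerSemicontinuous_fStar f).le_iSup_of_tendsto
        (by simpa using tendsto_const_nhds.sub (tendsto_one_div_add_atTop_nhds_zero_nat (𝕜 := ℝ))))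
      (iSup_le fun k ↦ fStar_mono hneg (sub_le_self _ Nat.one_div_pos_of_nat.le))
  have hG_le : ∀ k, eintegral Q (G k) ≤ L :=
    fun k ↦ le_liminf_of_le (by isBoundedDefault) <|
      (Metric.tendstoUniformly_iff.mp hconv' _ Nat.one_div_pos_of_nat).mono fun n hclose ↦
        eintegral_mono Q fun x ↦ fStar_mono hneg <|
          (sub_lt_comm.mp ((le_abs_self _).trans_lt (Real.dist_eq (h x) (hn n x) ▸ hclose x))).le
  have hG_lower : ∀ x, -(((C + 1).toNNReal : ℝ) : EReal) ≤ G 0 x := fun x ↦ by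
    refine le_trans ?_ (coe_le_fStar h1 _)
    rw [← EReal.coe_neg, EReal.coe_le_coe_iff, Nat.cast_zero, zero_add, div_one]
    linarith [(abs_le.mp (hC x)).1, (C + 1).le_coe_toNNReal]
  have hG_meas : ∀ k, Measurable (G k) := fun k ↦
    (fStar_mono hneg).measurable.comp (hh_meas.sub_const _)
  have hG_mono : Monotone G := fun k l hkl x ↦ fStar_mono hneg (by gcongr)
  rw [hG_sup, eintegral_iSup_of_monotone Q hG_meas hG_mono hG_lower]
  exact iSup_le hG_le

/-- The map h ↦ ∫ f*(h) dQ on bounded measurable functions is lower semicontinuous with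
respect to the uniform norm (sequential formulation). -/
theorem eintegral_fStar_lowerSemicontinuous {Ω : Type*} [MeasurableSpace Ω]
    (Q : Measure Ω) [IsProbabilityMeasure Q] (f : ℝ → EReal)
    (hlsc : LowerSemicontinuous f)
    (hconv : ∀ (x y a b : ℝ), 0 < a → 0 < b → a + b = 1 →
      f (a * x + b * y) ≤ (a : EReal) * f x + (b : EReal) * f y)
    (hbot : ∀ x, f x ≠ ⊥) (h1 : f 1 = 0) (hneg : ∀ x : ℝ, x < 0 → f x = ⊤)
    (h : Ω → ℝ) (hh : h ∈ BM Ω) (hn : ℕ → Ω → ℝ) (hhn : ∀ n, hn n ∈ BM Ω)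
    (hconv' : TendstoUniformly hn h atTop) :
    eintegral Q (fun x => fStar f (h x)) ≤
      liminf (fun n => eintegral Q (fun x => fStar f (hn n x))) atTop :=
  eintegral_fStar_lowerSemicontinuous_general Q f h1 hneg h hh hn hconv'
end

section
/- If P' is a finitely additive probability measure absolutely continuous w.r.t. the countably additive probability measure Q, then R*(P') = sup over bounded measurable h of ( ∫ h dP' − ∫ f*(h) dQ ), i.e., R*(P') equals the extended f-divergence D̄_f(P'‖Q), where R(h) = inf_{b∈ℝ} ( E_Q[f*(h+b)] − b ). -/
open MeasureTheory Filter ENNReal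

namespace EReal

theorem coe_sub_le_comm (c : ℝ) (x y : EReal) : (c : EReal) - x ≤ y ↔ (c : EReal) - y ≤ x := by
  induction x <;> induction y <;> simp [sub_top, ← coe_sub, -coe_sub_coe]
  grind

theorem coe_sub_iInf_le_iff {ι : Sort*} (c : ℝ) (g : ι → EReal) (y : EReal) :
    (c : EReal) - ⨅ i, g i ≤ y ↔ ∀ i, (c : EReal) - g i ≤ y := by
  simp_rw [coe_sub_le_comm c _ y, le_iInf_iff]

theorem coe_sub_sub_coe (c b : ℝ) (x : EReal) :
    (c : EReal) - (x - b) = ((c + b : ℝ) : EReal) - x := by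
  induction x with
  | bot => simp
  | top => simp [sub_top]
  | coe x => norm_cast; ring

end EReal

theorem iSup_sub_iInf_add_const_eq {Ω : Type*} (S : Set (Ω → ℝ)) (φ : (Ω → ℝ) → ℝ)
    (ψ : (Ω → ℝ) → EReal) (hS : ∀ h ∈ S, ∀ b : ℝ, h + (fun _ => b) ∈ S)
    (hφ : ∀ h ∈ S, ∀ b : ℝ, φ (h + fun _ => b) = φ h + b) :
    ⨆ h ∈ S, ((φ h : EReal) - ⨅ b : ℝ, (ψ (h + fun _ => b) - b)) =
      ⨆ h ∈ S, ((φ h : EReal) - ψ h) := by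
  refine le_antisymm (iSup₂_le fun h hh => ?_) (iSup₂_le fun h hh => ?_)
  · refine (EReal.coe_sub_iInf_le_iff _ _ _).2 fun b => ?_
    rw [EReal.coe_sub_sub_coe, ← hφ h hh b]
    exact le_iSup₂_of_le (h + fun _ => b) (hS h hh b) le_rfl
  · refine le_iSup₂_of_le h hh (EReal.sub_le_sub le_rfl ((iInf_le _ 0).trans_eq ?_))
    rw [EReal.coe_zero, sub_zero]
    exact congrArg ψ (add_zero h)

theorem const_mem_BM {Ω : Type*} [MeasurableSpace Ω] (b : ℝ) : (fun _ : Ω => b) ∈ BM Ω :=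
  ⟨measurable_const, |b|, fun _ => le_rfl⟩

theorem add_mem_BM {Ω : Type*} [MeasurableSpace Ω] {g g' : Ω → ℝ} (hg : g ∈ BM Ω)
    (hg' : g' ∈ BM Ω) : g + g' ∈ BM Ω := by
  obtain ⟨hgm, C, hC⟩ := hg
  obtain ⟨hg'm, C', hC'⟩ := hg'
  exact ⟨hgm.add hg'm, C + C', fun x => (abs_add_le _ _).trans (add_le_add (hC x) (hC' x))⟩

theorem Rstar_eq_Dbar_general {Ω : Type*} [MeasurableSpace Ω]
    (Q : Measure Ω) (f : ℝ → EReal)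
    (I : (Ω → ℝ) → ℝ)
    (hadd : ∀ g g', g ∈ BM Ω → g' ∈ BM Ω → I (g + g') = I g + I g')
    (hsmul : ∀ (c : ℝ) (g : Ω → ℝ), g ∈ BM Ω → I (c • g) = c * I g)
    (hmass : I (fun _ => (1:ℝ)) = 1) :
    (⨆ h ∈ BM Ω, ((I h : EReal) - Rfun Q f h)) =
      ⨆ h ∈ BM Ω, ((I h : EReal) - eintegral Q (fun x => fStar f (h x))) := by
  have hI_const (b : ℝ) : I (fun _ => b) = b := by
    simpa [hmass, Pi.smul_def] using hsmul b (fun _ => 1) (const_mem_BM 1)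
  exact iSup_sub_iInf_add_const_eq (BM Ω) I (fun g => eintegral Q fun x => fStar f (g x))
    (fun h hh b => add_mem_BM hh (const_mem_BM b))
    (fun h hh b => by rw [hadd h _ hh (const_mem_BM b), hI_const])

/-- If P' is a finitely additive probability measure (represented by its integration functional
I on bounded measurable functions) absolutely continuous w.r.t. the countably additive
probability measure Q, then R*(P') = sup_h ( ∫ h dP' − ∫ f*(h) dQ ) = D̄_f(P'‖Q), where
R(h) = inf_b ( E_Q[f*(h+b)] − b ). -/
theorem Rstar_eq_Dbar {Ω : Type*} [MeasurableSpace Ω]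
    (Q : Measure Ω) [IsProbabilityMeasure Q] (f : ℝ → EReal)
    (hlsc : LowerSemicontinuous f)
    (hconv : ∀ (x y a b : ℝ), 0 < a → 0 < b → a + b = 1 →
      f (a * x + b * y) ≤ (a : EReal) * f x + (b : EReal) * f y)
    (hbot : ∀ x, f x ≠ ⊥) (h1 : f 1 = 0) (hneg : ∀ x : ℝ, x < 0 → f x = ⊤)
    (hfin : ∃ ε > (0:ℝ), ∀ x : ℝ, |x - 1| < ε → f x ≠ ⊤)
    (I : (Ω → ℝ) → ℝ)
    (hadd : ∀ g g', g ∈ BM Ω → g' ∈ BM Ω → I (g + g') = I g + I g')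
    (hsmul : ∀ (c : ℝ) (g : Ω → ℝ), g ∈ BM Ω → I (c • g) = c * I g)
    (hpos : ∀ g ∈ BM Ω, (∀ x, 0 ≤ g x) → 0 ≤ I g)
    (hmass : I (fun _ => (1:ℝ)) = 1)
    (hac : ∀ E : Set Ω, MeasurableSet E → Q E = 0 → I (Set.indicator E fun _ => (1:ℝ)) = 0) :
    (⨆ h ∈ BM Ω, ((I h : EReal) - Rfun Q f h)) =
      ⨆ h ∈ BM Ω, ((I h : EReal) - eintegral Q (fun x => fStar f (h x))) :=
  Rstar_eq_Dbar_general Q f I hadd hsmul hmass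
end
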